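/- Let R be the subalgebra of UT_6(F) of matrices with diagonal (0,a,b,c,a,0) and possibly nonzero entries in positions (1,2),(1,3),(1,4),(1,5),(1,6),(2,3),(2,6),(3,6),(4,5),(4,6),(5,6). Then R is closed under the reflection involution θ_6, its center is Z(R) = F·e_{16}, and [x_1^+,x_2^+][x_3^+,x_4^+][x_5^+,x_6^+] is a proper central *-polynomial for (R, θ_6): every such product of three commutators of θ_6-symmetric elements of R lies in F·e_{16}, and some such product is nonzero. -/

import Mathlib

open Matrix

/-- The reflection involution `θ_6` on `M_6(F)`. -/
def reflInv {F : Type*} [Field F] (A : Matrix (Fin 6) (Fin 6) F) :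
    Matrix (Fin 6) (Fin 6) F :=
  Matrix.of fun i j => A j.rev i.rev

/-- Membership in the algebra `R ⊆ UT_6(F)`: upper triangular with diagonal
`(0,a,b,c,a,0)` and entries `(2,4),(2,5),(3,4),(3,5)` (1-indexed) equal to zero. -/
def memR {F : Type*} [Field F] (M : Matrix (Fin 6) (Fin 6) F) : Prop :=
  (∀ i j : Fin 6, j < i → M i j = 0) ∧
  M 0 0 = 0 ∧ M 5 5 = 0 ∧ M 1 1 = M 4 4 ∧
  M 1 3 = 0 ∧ M 1 4 = 0 ∧ M 2 3 = 0 ∧ M 2 4 = 0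

/-!
A θ₆-symmetric element of `R` is determined by eight scalars (`symMatR`), and the commutator
of two of them always has the shape `commForm α β γ δ ε`: strictly upper triangular, supported on
`e₁₂ - e₅₆, e₁₃ - e₄₆, e₁₄ - e₃₆, e₂₃ - e₄₅, e₁₅ - e₂₆` (1-indexed). In any product of three such
matrices only the paths `1 → 4 → 5 → 6` and `1 → 2 → 3 → 6` survive, so it is a multiple of `e₁₆`;
a suitable choice makes the `1 → 2 → 3 → 6` path nonzero.

For the centre: `e₁₆` annihilates `R` on both sides, because the first column and the last row of
every element of `R` vanish. Conversely, commuting with a matrix unit `e_ij ∈ R` forces row `j` and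
column `i` to vanish off the diagonal and `M_ii = M_jj`; the units `e₁₂, e₂₃, e₁₄, e₁₅, e₄₅, e₃₆,
e₅₆` of `R` leave only the `(1, 6)` entry.
-/

namespace memR

variable {F : Type*} [Field F] {X : Matrix (Fin 6) (Fin 6) F}

lemma row_five (hX : memR X) (j : Fin 6) : X 5 j = 0 := by
  rcases (Fin.le_last j).lt_or_eq with h | rfl
  exacts [hX.1 _ _ h, hX.2.2.1]

lemma col_zero (hX : memR X) (i : Fin 6) : X i 0 = 0 := by
  rcases (Fin.zero_le i).lt_or_eq with h | rfl
  exacts [hX.1 _ _ h, hX.2.1]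

end memR

section

variable {F : Type*} [Field F]

lemma memR_reflInv {M : Matrix (Fin 6) (Fin 6) F} (hM : memR M) : memR (reflInv M) := by
  obtain ⟨hlow, h00, h55, hdiag, h13, h14, h23, h24⟩ := hM
  exact ⟨fun i j hij => hlow _ _ (Fin.rev_lt_rev.mpr hij), h55, h00, hdiag.symm, h24, h14, h23, h13⟩

lemma memR_single {i j : Fin 6} (hij : i < j)
    (hblock : i ∈ ({1, 2} : Finset (Fin 6)) → j ∉ ({3, 4} : Finset (Fin 6))) :
    memR (single i j (1 : F)) := by
  simp only [Finset.mem_insert, Finset.mem_singleton, not_or] at hblock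
  simp only [memR, single_apply]
  refine ⟨fun k l hlk => if_neg ?_, ?_⟩
  · rintro ⟨rfl, rfl⟩
    exact lt_asymm hij hlk
  · simp only [Fin.ext_iff, Fin.lt_def] at *
    split_ifs <;> simp_all

lemma single_zero_five_mul_eq_zero {X : Matrix (Fin 6) (Fin 6) F} (hX : memR X) :
    single 0 5 (1 : F) * X = 0 := by
  ext i j
  by_cases hi : i = 0
  · subst hi
    rw [single_mul_apply_same, hX.row_five, mul_zero, Matrix.zero_apply]
  · rw [single_mul_apply_of_ne _ _ _ _ _ hi, Matrix.zero_apply]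

lemma mul_single_zero_five_eq_zero {X : Matrix (Fin 6) (Fin 6) F} (hX : memR X) :
    X * single 0 5 (1 : F) = 0 := by
  ext i j
  by_cases hj : j = 5
  · subst hj
    rw [mul_single_apply_same, hX.col_zero, zero_mul, Matrix.zero_apply]
  · rw [mul_single_apply_of_ne _ _ _ _ _ hj, Matrix.zero_apply]

lemma eq_smul_single_of_forall_mul_comm {M : Matrix (Fin 6) (Fin 6) F} (hM : memR M)
    (hcomm : ∀ X, memR X → M * X = X * M) : M = M 0 5 • single 0 5 (1 : F) := by
  have comm (i j : Fin 6) (hij : i < j)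
      (hblock : i ∈ ({1, 2} : Finset (Fin 6)) → j ∉ ({3, 4} : Finset (Fin 6))) :
      Commute (single i j 1) M :=
    (hcomm _ (memR_single hij hblock)).symm
  have c01 := comm 0 1 (by decide) (by decide)
  have c12 := comm 1 2 (by decide) (by decide)
  have c03 := comm 0 3 (by decide) (by decide)
  have c04 := comm 0 4 (by decide) (by decide)
  have c34 := comm 3 4 (by decide) (by decide)
  have c25 := comm 2 5 (by decide) (by decide)
  have c45 := comm 4 5 (by decide) (by decide)
  have row (i k : Fin 6) (c : Commute (single k i 1) M) (hii : M i i = 0) (j : Fin 6) :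
      M i j = 0 := by
    rcases eq_or_ne j i with rfl | hji
    exacts [hii, row_eq_zero_of_commute_single c hji]
  have h11 : M 1 1 = 0 := (diag_eq_of_commute_single c01).symm.trans hM.2.1
  have h22 : M 2 2 = 0 := (diag_eq_of_commute_single c12).symm.trans h11
  have h44 : M 4 4 = 0 := hM.2.2.2.1 ▸ h11
  have h33 : M 3 3 = 0 := (diag_eq_of_commute_single c34).trans h44
  have h01 : M 0 1 = 0 := col_eq_zero_of_commute_single c12 (by decide)
  have h02 : M 0 2 = 0 := col_eq_zero_of_commute_single c25 (by decide)
  have h03 : M 0 3 = 0 := col_eq_zero_of_commute_single c34 (by decide)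
  have h04 : M 0 4 = 0 := col_eq_zero_of_commute_single c45 (by decide)
  ext i j
  fin_cases i
  · fin_cases j <;> simp [hM.2.1, h01, h02, h03, h04]
  all_goals simp [row 1 0 c01 h11, row 2 1 c12 h22, row 3 0 c03 h33,
    row 4 0 c04 h44, hM.row_five]

lemma forall_mul_comm_iff {M : Matrix (Fin 6) (Fin 6) F} (hM : memR M) :
    (∀ X, memR X → M * X = X * M) ↔ ∃ c : F, M = c • single 0 5 (1 : F) := by
  refine ⟨fun hcomm => ⟨_, eq_smul_single_of_forall_mul_comm hM hcomm⟩, ?_⟩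
  rintro ⟨c, rfl⟩ X hX
  rw [smul_mul_assoc, mul_smul_comm, single_zero_five_mul_eq_zero hX,
    mul_single_zero_five_eq_zero hX]

def symMatR (a b p q r s t u : F) : Matrix (Fin 6) (Fin 6) F :=
  !![0, p, q, r, s, t;
     0, a, u, 0, 0, s;
     0, 0, b, 0, 0, r;
     0, 0, 0, b, u, q;
     0, 0, 0, 0, a, p;
     0, 0, 0, 0, 0, 0]

lemma memR_symMatR (a b p q r s t u : F) : memR (symMatR a b p q r s t u) := by
  refine ⟨fun i j h => ?_, rfl, rfl, rfl, rfl, rfl, rfl, rfl⟩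
  fin_cases i <;> fin_cases j <;> first | rfl | exact absurd h (by decide)

lemma reflInv_symMatR (a b p q r s t u : F) :
    reflInv (symMatR a b p q r s t u) = symMatR a b p q r s t u := by
  ext i j
  fin_cases i <;> fin_cases j <;> rfl

lemma eq_symMatR {M : Matrix (Fin 6) (Fin 6) F} (hM : memR M) (hs : reflInv M = M) :
    M = symMatR (M 1 1) (M 2 2) (M 0 1) (M 0 2) (M 0 3) (M 0 4) (M 0 5) (M 1 2) := by
  obtain ⟨hlow, h00, h55, hdiag, h13, h14, h23, h24⟩ := hM
  have hsym (i j : Fin 6) : M i j = M j.rev i.rev := (congrFun (congrFun hs i) j).symm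
  ext i j
  fin_cases i <;> fin_cases j <;>
    simp only [symMatR, of_apply, Matrix.cons_val, Fin.isValue, Fin.reduceFinMk, Fin.zero_eta,
      Fin.mk_one] <;>
    first
      | rfl
      | assumption
      | exact hdiag.symm
      | exact hlow _ _ (by decide)
      | exact hsym _ _

def commForm (α β γ δ ε : F) : Matrix (Fin 6) (Fin 6) F :=
  !![0, α, β, γ, ε, 0;
     0, 0, δ, 0, 0, -ε;
     0, 0, 0, 0, 0, -γ;
     0, 0, 0, 0, -δ, -β;
     0, 0, 0, 0, 0, -α;
     0, 0, 0, 0, 0, 0]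

lemma symMatR_commutator (a b p q r s t u a' b' p' q' r' s' t' u' : F) :
    symMatR a b p q r s t u * symMatR a' b' p' q' r' s' t' u' -
      symMatR a' b' p' q' r' s' t' u' * symMatR a b p q r s t u =
    commForm (p * a' - a * p') (p * u' + q * b' - u * p' - b * q') (r * b' - b * r')
      (a * u' + u * b' - u * a' - b * u') (r * u' + s * a' - u * r' - a * s') := by
  ext i j
  fin_cases i <;> fin_cases j <;>
    simp only [symMatR, commForm, Matrix.sub_apply, mul_apply, Fin.sum_univ_six, of_apply,
      Matrix.cons_val, Fin.isValue, Fin.reduceFinMk, Fin.zero_eta, Fin.mk_one] <;>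
    ring

lemma commForm_mul_mul (α β γ δ ε α' β' γ' δ' ε' α'' β'' γ'' δ'' ε'' : F) :
    commForm α β γ δ ε * commForm α' β' γ' δ' ε' * commForm α'' β'' γ'' δ'' ε'' =
      (γ * δ' * α'' - α * δ' * γ'') • single 0 5 (1 : F) := by
  ext i j
  fin_cases i <;> fin_cases j <;>
    simp only [commForm, mul_apply, Fin.sum_univ_six, of_apply, Matrix.cons_val, Fin.isValue,
      Fin.reduceFinMk, Fin.zero_eta, Fin.mk_one, Matrix.smul_apply, single_apply, Fin.reduceEq,
      and_true, and_false, if_true, if_false, smul_eq_mul, mul_one, mul_zero] <;>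
    ring

end

theorem stmt_19_general (F : Type*) [Field F] :
    (∀ M : Matrix (Fin 6) (Fin 6) F, memR M → memR (reflInv M)) ∧
    (∀ M : Matrix (Fin 6) (Fin 6) F, memR M →
      ((∀ X : Matrix (Fin 6) (Fin 6) F, memR X → M * X = X * M) ↔
        ∃ c : F, M = c • Matrix.single 0 5 (1 : F))) ∧
    (∀ A₁ A₂ A₃ A₄ A₅ A₆ : Matrix (Fin 6) (Fin 6) F,
      memR A₁ → memR A₂ → memR A₃ → memR A₄ → memR A₅ → memR A₆ →
      reflInv A₁ = A₁ → reflInv A₂ = A₂ → reflInv A₃ = A₃ →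
      reflInv A₄ = A₄ → reflInv A₅ = A₅ → reflInv A₆ = A₆ →
      ∃ c : F, (A₁ * A₂ - A₂ * A₁) * (A₃ * A₄ - A₄ * A₃) * (A₅ * A₆ - A₆ * A₅) =
        c • Matrix.single 0 5 (1 : F)) ∧
    (∃ A₁ A₂ A₃ A₄ A₅ A₆ : Matrix (Fin 6) (Fin 6) F,
      memR A₁ ∧ memR A₂ ∧ memR A₃ ∧ memR A₄ ∧ memR A₅ ∧ memR A₆ ∧
      reflInv A₁ = A₁ ∧ reflInv A₂ = A₂ ∧ reflInv A₃ = A₃ ∧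
      reflInv A₄ = A₄ ∧ reflInv A₅ = A₅ ∧ reflInv A₆ = A₆ ∧
      (A₁ * A₂ - A₂ * A₁) * (A₃ * A₄ - A₄ * A₃) * (A₅ * A₆ - A₆ * A₅) ≠ 0) := by
  refine ⟨fun M => memR_reflInv, fun M => forall_mul_comm_iff, ?_, ?_⟩
  · intro A₁ A₂ A₃ A₄ A₅ A₆ h₁ h₂ h₃ h₄ h₅ h₆ s₁ s₂ s₃ s₄ s₅ s₆
    rw [eq_symMatR h₁ s₁, eq_symMatR h₂ s₂, eq_symMatR h₃ s₃, eq_symMatR h₄ s₄,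
      eq_symMatR h₅ s₅, eq_symMatR h₆ s₆, symMatR_commutator, symMatR_commutator,
      symMatR_commutator, commForm_mul_mul]
    exact ⟨_, rfl⟩
  · refine ⟨symMatR 1 0 0 0 0 0 0 0, symMatR 0 0 1 0 0 0 0 0, symMatR 1 0 0 0 0 0 0 0,
      symMatR 0 0 0 0 0 0 0 1, symMatR 0 1 0 0 0 0 0 0, symMatR 0 0 0 0 1 0 0 0,
      memR_symMatR .., memR_symMatR .., memR_symMatR .., memR_symMatR .., memR_symMatR ..,
      memR_symMatR .., reflInv_symMatR .., reflInv_symMatR .., reflInv_symMatR ..,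
      reflInv_symMatR .., reflInv_symMatR .., reflInv_symMatR .., ?_⟩
    rw [symMatR_commutator, symMatR_commutator, symMatR_commutator, commForm_mul_mul]
    norm_num [← Matrix.ext_iff, single_apply]

/-- `R` is closed under `θ_6`, `Z(R) = F·e_{16}`, and
`[x₁⁺,x₂⁺][x₃⁺,x₄⁺][x₅⁺,x₆⁺]` is a proper central `*`-polynomial for `(R, θ_6)`. -/
theorem stmt_19 (F : Type*) [Field F] [CharZero F] :
    (∀ M : Matrix (Fin 6) (Fin 6) F, memR M → memR (reflInv M)) ∧
    (∀ M : Matrix (Fin 6) (Fin 6) F, memR M →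
      ((∀ X : Matrix (Fin 6) (Fin 6) F, memR X → M * X = X * M) ↔
        ∃ c : F, M = c • Matrix.single 0 5 (1 : F))) ∧
    (∀ A₁ A₂ A₃ A₄ A₅ A₆ : Matrix (Fin 6) (Fin 6) F,
      memR A₁ → memR A₂ → memR A₃ → memR A₄ → memR A₅ → memR A₆ →
      reflInv A₁ = A₁ → reflInv A₂ = A₂ → reflInv A₃ = A₃ →
      reflInv A₄ = A₄ → reflInv A₅ = A₅ → reflInv A₆ = A₆ →
      ∃ c : F, (A₁ * A₂ - A₂ * A₁) * (A₃ * A₄ - A₄ * A₃) * (A₅ * A₆ - A₆ * A₅) =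
        c • Matrix.single 0 5 (1 : F)) ∧
    (∃ A₁ A₂ A₃ A₄ A₅ A₆ : Matrix (Fin 6) (Fin 6) F,
      memR A₁ ∧ memR A₂ ∧ memR A₃ ∧ memR A₄ ∧ memR A₅ ∧ memR A₆ ∧
      reflInv A₁ = A₁ ∧ reflInv A₂ = A₂ ∧ reflInv A₃ = A₃ ∧
      reflInv A₄ = A₄ ∧ reflInv A₅ = A₅ ∧ reflInv A₆ = A₆ ∧
      (A₁ * A₂ - A₂ * A₁) * (A₃ * A₄ - A₄ * A₃) * (A₅ * A₆ - A₆ * A₅) ≠ 0) :=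
  stmt_19_general F
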